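/- arXiv:2207.04666 — 5 statements merged into one kernel-verified Lean document; each statement's English description precedes it below -/
import Mathlib

section
/- Let P be a digital (t,m,s)-net in prime power base b. Then for any u ⊆ {1,…,s} and k ∈ ℕ₀^{|u|}, the cardinality |V(u,k) ∩ P^⊥| is at most 1 if |k| ≤ m−t, and at most b^{|k|−m+t} if |k| > m−t. -/
open Finset

noncomputable section

/-- the `i`-th `b`-adic digit of a natural number `k`. -/
def ndigit (b k i : ℕ) : ℕ := k / b ^ i % b

/-- the `(i+1)`-st `b`-adic digit of a real number `x ∈ [0,1)`
(the unique expansion with infinitely many digits `≠ b-1`). -/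
def rdigit (b : ℕ) (x : ℝ) (i : ℕ) : ℕ := (⌊(b : ℝ) ^ (i + 1) * x⌋).toNat % b

/-- the primitive `b`-th root of unity `ω_b = exp(2πi/b)`. -/
def omg (b : ℕ) : ℂ := Complex.exp (2 * Real.pi * Complex.I / b)

/-- embed a digit (element of `Z_b`) into the finite field `F` via the bijection `φ`. -/
def toF {F : Type} [Field F] [Fintype F] (φ : Fin (Fintype.card F) ≃ F) (a : ℕ) : F :=
  φ ⟨a % Fintype.card F, Nat.mod_lt a Fintype.card_pos⟩

/-- map a field element back to a digit in `Z_b` via `φ⁻¹`. -/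
def fromF {F : Type} [Field F] [Fintype F] (φ : Fin (Fintype.card F) ≃ F) (a : F) : ℕ :=
  (φ.symm a : ℕ)

/-- the `k`-th `b`-adic Walsh function, `b = |F|`,
`wal_k(x) = ω_b^{φ⁻¹(φ(κ₀)φ(ξ₁)) + φ⁻¹(φ(κ₁)φ(ξ₂)) + ⋯}`. -/
def wal {F : Type} [Field F] [Fintype F] (φ : Fin (Fintype.card F) ≃ F) (k : ℕ) (x : ℝ) : ℂ :=
  omg (Fintype.card F) ^
    ∑ i ∈ Finset.range k,
      fromF φ (toF φ (ndigit (Fintype.card F) k i) * toF φ (rdigit (Fintype.card F) x i))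

/-- the multivariate `b`-adic Walsh function `wal_k(x) = ∏_j wal_{k_j}(x_j)`. -/
def walv {F : Type} [Field F] [Fintype F] {s : ℕ} (φ : Fin (Fintype.card F) ≃ F)
    (k : Fin s → ℕ) (x : Fin s → ℝ) : ℂ :=
  ∏ j, wal φ (k j) (x j)

/-- the `j`-th coordinate of the `h`-th point of the digital net with generating
matrices `C_1,…,C_s` (with `n` rows, `m` columns, rows of index `≥ n` unused). -/
def dnet {F : Type} [Field F] [Fintype F] {s m : ℕ} (φ : Fin (Fintype.card F) ≃ F)
    (C : Fin s → ℕ → Fin m → F) (n : ℕ) (h : ℕ) (j : Fin s) : ℝ :=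
  ∑ i ∈ Finset.range n,
    (fromF φ (∑ c, C j i c * toF φ (ndigit (Fintype.card F) h (c : ℕ))) : ℝ) /
      (Fintype.card F : ℝ) ^ (i + 1)

/-- membership in the dual net `P^⊥`:
`C_1^⊤ ν_n(k_1) + ⋯ + C_s^⊤ ν_n(k_s) = 0 ∈ F^m`. -/
def inDual {F : Type} [Field F] [Fintype F] {s m : ℕ} (φ : Fin (Fintype.card F) ≃ F)
    (C : Fin s → ℕ → Fin m → F) (n : ℕ) (k : Fin s → ℕ) : Prop :=
  ∀ c : Fin m,
    ∑ j, ∑ i ∈ Finset.range n, C j i c * toF φ (ndigit (Fintype.card F) (k j) i) = 0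

/-- `V(u,k) = {ℓ ∈ ℕ₀^s : ℓ_j < b^{k_j} if j ∈ u, ℓ_j = 0 otherwise}`. -/
def Vset (b : ℕ) {s : ℕ} (u : Finset (Fin s)) (k : Fin s → ℕ) : Finset (Fin s → ℕ) :=
  Fintype.piFinset fun j => Finset.range (if j ∈ u then b ^ k j else 1)

/-- `A(u,l) = {ℓ ∈ ℕ₀^s : b^{l_j-1} ≤ ℓ_j < b^{l_j} if j ∈ u, ℓ_j = 0 otherwise}`. -/
def Aset (b : ℕ) {s : ℕ} (u : Finset (Fin s)) (l : Fin s → ℕ) : Finset (Fin s → ℕ) :=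
  (Vset b u l).filter fun ℓ => ∀ j ∈ u, b ^ (l j - 1) ≤ ℓ j

/-- `k + 1_v`: add one to the components in `v`. -/
def plusOne {s : ℕ} (k : Fin s → ℕ) (v : Finset (Fin s)) : Fin s → ℕ :=
  fun j => if j ∈ v then k j + 1 else k j

/-- the gain coefficient `Γ_{u,k}` of an `N`-element point set in base `b`. -/
def gain {s : ℕ} (b N : ℕ) (x : Fin N → Fin s → ℝ) (u : Finset (Fin s))
    (k : Fin s → ℕ) : ℝ :=
  (1 / N) * ∑ i, ∑ i', ∏ j ∈ u,
    ((b * (if ⌊(b : ℝ) ^ (k j + 1) * x i j⌋ = ⌊(b : ℝ) ^ (k j + 1) * x i' j⌋ then (1:ℝ) else 0) -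
        (if ⌊(b : ℝ) ^ (k j) * x i j⌋ = ⌊(b : ℝ) ^ (k j) * x i' j⌋ then (1:ℝ) else 0)) /
      (b - 1))

/-- `C_{u,k}`: the matrix stacking the first `k_j` rows of `C_j` for `j ∈ u`
(a generating matrix `C_j` having `n` rows). -/
def Cuk {F : Type} [Field F] [Fintype F] {s m : ℕ} (C : Fin s → ℕ → Fin m → F) (n : ℕ)
    (u : Finset (Fin s)) (k : Fin s → ℕ) :
    Matrix ((j : Fin s) × Fin (min (if j ∈ u then k j else 0) n)) (Fin m) F :=
  fun p c => C p.1 (p.2 : ℕ) c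

/-- `C` generates a digital `(t,m,s)`-net in base `b = |F|`:
`C_{u,k}` has full row rank whenever `|k| ≤ m - t`. -/
def IsDigitalTNet {F : Type} [Field F] [Fintype F] {s m : ℕ}
    (C : Fin s → ℕ → Fin m → F) (n : ℕ) (t : ℕ) : Prop :=
  ∀ u : Finset (Fin s), ∀ k : Fin s → ℕ,
    (∑ j ∈ u, k j) + t ≤ m → (Cuk C n u k).rank = ∑ j ∈ u, k j

/-- the upper bound `B(u,k) = b^{m - rank(C_{u,k})} (b-1)^{rank(C_{u,k}) - rank(C_{u,k+1_u})}`. -/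
def Bcoef {F : Type} [Field F] [Fintype F] {s m : ℕ} (C : Fin s → ℕ → Fin m → F) (n : ℕ)
    (u : Finset (Fin s)) (k : Fin s → ℕ) : ℝ :=
  (Fintype.card F : ℝ) ^ ((m : ℤ) - ((Cuk C n u k).rank : ℤ)) *
    ((Fintype.card F : ℝ) - 1) ^
      (((Cuk C n u k).rank : ℤ) - ((Cuk C n u (plusOne k u)).rank : ℤ))

/-- `t*_u = m + 1 - min{|k| : k ∈ ℕ^{|u|}, C_{u,k} not full row rank}`. -/
def tstar {F : Type} [Field F] [Fintype F] {s m : ℕ} (C : Fin s → ℕ → Fin m → F) (n : ℕ)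
    (u : Finset (Fin s)) : ℤ :=
  (m : ℤ) + 1 -
    (sInf {r : ℕ | ∃ k : Fin s → ℕ, (∀ j ∈ u, 1 ≤ k j) ∧
      (Cuk C n u k).rank ≠ ∑ j ∈ u, k j ∧ r = ∑ j ∈ u, k j} : ℕ)

end

section Aux

lemma ndigit_lt {b : ℕ} (hb : 0 < b) (a i : ℕ) : ndigit b a i < b := Nat.mod_lt _ hb

lemma ndigit_eq_zero {b : ℕ} (hb : 0 < b) {a K i : ℕ} (ha : a < b ^ K) (hi : K ≤ i) :
    ndigit b a i = 0 := by
  have : a < b ^ i := lt_of_lt_of_le ha (Nat.pow_le_pow_right hb hi)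
  simp [ndigit, Nat.div_eq_of_lt this]

lemma ndigit_succ {b : ℕ} (a i : ℕ) : ndigit b (a / b) i = ndigit b a (i + 1) := by
  simp [ndigit, Nat.div_div_eq_div_mul, pow_succ, mul_comm]

lemma ndigit_inj {b : ℕ} (hb : 0 < b) :
    ∀ (K a a' : ℕ), a < b ^ K → a' < b ^ K →
      (∀ i, i < K → ndigit b a i = ndigit b a' i) → a = a' := by
  intro K
  induction K with
  | zero => intro a a' ha ha' _; simp at ha ha'; omega
  | succ K IH =>
    intro a a' ha ha' h
    have h0 : a % b = a' % b := by
      have := h 0 (by omega)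
      simpa [ndigit] using this
    have hd : a / b = a' / b := by
      apply IH
      · rw [Nat.div_lt_iff_lt_mul hb]; calc a < b ^ (K+1) := ha
          _ = b ^ K * b := pow_succ b K
      · rw [Nat.div_lt_iff_lt_mul hb]; calc a' < b ^ (K+1) := ha'
          _ = b ^ K * b := pow_succ b K
      · intro i hi
        rw [ndigit_succ, ndigit_succ]
        exact h (i + 1) (by omega)
    calc a = b * (a / b) + a % b := (Nat.div_add_mod a b).symm
      _ = b * (a' / b) + a' % b := by rw [hd, h0]
      _ = a' := Nat.div_add_mod a' b

lemma toF_inj {F : Type} [Field F] [Fintype F] (φ : Fin (Fintype.card F) ≃ F)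
    {a a' : ℕ} (ha : a < Fintype.card F) (ha' : a' < Fintype.card F)
    (h : toF φ a = toF φ a') : a = a' := by
  unfold toF at h
  have := φ.injective h
  rw [Fin.mk.injEq, Nat.mod_eq_of_lt ha, Nat.mod_eq_of_lt ha'] at this
  exact this

lemma toF_zero {F : Type} [Field F] [Fintype F] (φ : Fin (Fintype.card F) ≃ F)
    (hφ : φ ⟨0, Fintype.card_pos⟩ = 0) : toF φ 0 = 0 := by
  unfold toF
  simpa using hφ

lemma exists_cut {α : Type*} [DecidableEq α] (u : Finset α) (f : α → ℕ) :
    ∀ r : ℕ, r ≤ ∑ j ∈ u, f j →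
      ∃ g : α → ℕ, (∀ j, g j ≤ f j) ∧ (∀ j, j ∉ u → g j = 0) ∧ ∑ j ∈ u, g j = r := by
  induction u using Finset.induction_on with
  | empty =>
    intro r hr
    simp only [Finset.sum_empty, Nat.le_zero] at hr
    exact ⟨fun _ => 0, fun _ => Nat.zero_le _, fun _ _ => rfl, by simp [hr]⟩
  | @insert a u ha IH =>
    intro r hr
    rw [Finset.sum_insert ha] at hr
    by_cases h1 : r ≤ ∑ j ∈ u, f j
    · obtain ⟨g, hg1, hg2, hg3⟩ := IH r h1
      refine ⟨g, hg1, fun j hj => hg2 j (fun hju => hj (Finset.mem_insert_of_mem hju)), ?_⟩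
      rw [Finset.sum_insert ha, hg2 a ha, hg3, zero_add]
    · push_neg at h1
      refine ⟨fun j => if j ∈ u then f j else if j = a then r - ∑ j ∈ u, f j else 0,
        ?_, ?_, ?_⟩
      · intro j
        dsimp only
        split_ifs with h2 h3
        · exact le_rfl
        · rw [h3]
          have hr' : r ≤ f a + ∑ j ∈ u, f j := hr
          omega
        · exact Nat.zero_le _
      · intro j hj
        rw [Finset.mem_insert, not_or] at hj
        dsimp only
        rw [if_neg hj.2, if_neg hj.1]
      · rw [Finset.sum_insert ha, if_neg ha, if_pos rfl,
          Finset.sum_congr rfl (fun j hj => if_pos hj)]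
        exact Nat.sub_add_cancel (le_of_lt h1)

lemma rank_row_select_le {K : Type*} [Field K] {r r' c : Type*} [Fintype r] [Fintype r']
    [Fintype c] (A : Matrix r c K) (f : r' → r) :
    (A.submatrix f _root_.id).rank ≤ A.rank := by
  rw [show (A.submatrix f _root_.id) = A.submatrix f (Equiv.refl c) from rfl]
  rw [Matrix.rank, Matrix.rank, Matrix.mulVecLin_submatrix, LinearMap.range_comp,
    LinearMap.range_comp,
    show LinearMap.funLeft K K (Equiv.refl c).symm
      = (LinearEquiv.funCongrLeft K K (Equiv.refl c).symm : (c → K) →ₗ[K] (c → K)) from rfl,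
    LinearEquiv.range, Submodule.map_top]
  exact Submodule.finrank_map_le _ _

lemma fin_sum_ext {M : Type*} [AddCommMonoid M] (g : ℕ → M) (a n : ℕ) (h : a ≤ n)
    (h0 : ∀ i, a ≤ i → i < n → g i = 0) :
    ∑ i : Fin a, g ↑i = ∑ i ∈ Finset.range n, g i := by
  rw [Fin.sum_univ_eq_sum_range]
  exact Finset.sum_subset (Finset.range_subset_range.mpr h)
    (fun i hi hni => h0 i (by simpa using hni) (by simpa using hi))

/-- master counting lemma: `|V(u,k) ∩ P^⊥| ≤ b^{|k| - rank C_{u,k}}`. -/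
lemma key_count {F : Type} [Field F] [Fintype F] {s m : ℕ}
    (φ : Fin (Fintype.card F) ≃ F) (hφ : φ ⟨0, Fintype.card_pos⟩ = 0)
    (C : Fin s → ℕ → Fin m → F) (n : ℕ)
    (u : Finset (Fin s)) (k : Fin s → ℕ) :
    Set.ncard {ℓ : Fin s → ℕ | ℓ ∈ Vset (Fintype.card F) u k ∧ inDual φ C n ℓ} ≤
      Fintype.card F ^ ((∑ j ∈ u, k j) - (Cuk C n u k).rank) := by
  classical
  have hb : 0 < Fintype.card F := Fintype.card_pos
  set K : Fin s → ℕ := fun j => if j ∈ u then k j else 0 with hK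
  set M := Cuk C n u k with hM
  set f : (((j : Fin s) × Fin (min (K j) n)) → F) →ₗ[F] (Fin m → F) :=
    M.transpose.mulVecLin with hf
  set S := {ℓ : Fin s → ℕ | ℓ ∈ Vset (Fintype.card F) u k ∧ inDual φ C n ℓ} with hS
  -- membership in Vset gives digit bounds
  have hV : ∀ ℓ ∈ S, ∀ j, ℓ j < Fintype.card F ^ K j := by
    intro ℓ hℓ j
    have h1 : ℓ j ∈ Finset.range (if j ∈ u then Fintype.card F ^ k j else 1) := by
      have h2 := hℓ.1
      simp only [Vset] at h2
      exact Fintype.mem_piFinset.mp h2 j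
    rw [Finset.mem_range] at h1
    simp only [hK]
    split_ifs with hj <;> simp [hj] at h1 ⊢ <;> omega
  -- the x-map lands in ker f
  have hker : ∀ ℓ ∈ S, (fun p : (j : Fin s) × Fin (min (K j) n) =>
      toF φ (ndigit (Fintype.card F) (ℓ p.1) p.2)) ∈ LinearMap.ker f := by
    intro ℓ hℓ
    rw [LinearMap.mem_ker]
    funext c
    have hdual := hℓ.2 c
    simp only [hf, Matrix.mulVecLin_apply, Matrix.mulVec, dotProduct,
      Matrix.transpose_apply, Pi.zero_apply]
    rw [← Finset.univ_sigma_univ, Finset.sum_sigma]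
    rw [← hdual]
    apply Finset.sum_congr rfl
    intro j _
    simp only [hM, Cuk]
    exact fin_sum_ext (fun i => C j i c * toF φ (ndigit (Fintype.card F) (ℓ j) i))
      (min (K j) n) n (Nat.min_le_right _ _)
      (fun i hai hin => by
        have hKj : K j ≤ i := by omega
        rw [ndigit_eq_zero hb (hV ℓ hℓ j) hKj, toF_zero φ hφ, mul_zero])
  -- inject into ker f × extra digits
  set E := (j : Fin s) × Fin (K j - min (K j) n) with hE
  have hcard : Set.ncard S ≤ Nat.card (↥(LinearMap.ker f) × (E → F)) := by
    rw [← Nat.card_coe_set_eq]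
    apply Nat.card_le_card_of_injective
      (fun ℓ : S => (⟨fun p => toF φ (ndigit (Fintype.card F) ((ℓ : Fin s → ℕ) p.1) p.2),
          hker ℓ ℓ.2⟩,
        fun p : E => toF φ (ndigit (Fintype.card F) ((ℓ : Fin s → ℕ) p.1)
          (min (K p.1) n + p.2))))
    intro ⟨ℓ, hℓ⟩ ⟨ℓ', hℓ'⟩ h
    simp only [Prod.mk.injEq, Subtype.mk.injEq] at h
    obtain ⟨h1, h2⟩ := h
    have : ℓ = ℓ' := by
      ext j
      apply ndigit_inj hb (K j) _ _ (hV ℓ hℓ j) (hV ℓ' hℓ' j)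
      intro i hi
      by_cases hcase : i < min (K j) n
      · have h3 := congrFun h1 ⟨j, ⟨i, hcase⟩⟩
        exact toF_inj φ (ndigit_lt hb _ _) (ndigit_lt hb _ _) h3
      · have hlt : i - min (K j) n < K j - min (K j) n := by omega
        have h3 := congrFun h2 ⟨j, ⟨i - min (K j) n, hlt⟩⟩
        simp only at h3
        rw [show min (K j) n + (i - min (K j) n) = i by omega] at h3
        exact toF_inj φ (ndigit_lt hb _ _) (ndigit_lt hb _ _) h3
    exact Subtype.ext this
  refine le_trans hcard ?_
  -- compute the cardinality of the target
  haveI : Fintype ↥(LinearMap.ker f) := Fintype.ofFinite _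
  rw [Nat.card_prod, Nat.card_eq_fintype_card, Nat.card_eq_fintype_card,
    @Module.card_eq_pow_finrank F _ _ _ _ _, Fintype.card_fun]
  have hrange : Module.finrank F ↥(LinearMap.range f) = M.rank := by
    rw [hf, ← Matrix.rank_transpose M]
    rfl
  have hdim := LinearMap.finrank_range_add_finrank_ker f
  rw [Module.finrank_pi, hrange] at hdim
  have hcardR : Fintype.card ((j : Fin s) × Fin (min (K j) n)) = ∑ j, min (K j) n := by
    simp [Fintype.card_sigma]
  have hcardE : Fintype.card E = ∑ j, (K j - min (K j) n) := by
    simp [hE, Fintype.card_sigma]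
  rw [hcardR] at hdim
  rw [hcardE, ← pow_add]
  apply Nat.pow_le_pow_right hb
  have hsum1 : ∑ j ∈ u, k j = ∑ j, K j := by
    rw [hK]
    rw [Finset.sum_ite_mem, Finset.univ_inter]
  have hsum2 : ∑ j, min (K j) n + ∑ j, (K j - min (K j) n) = ∑ j, K j := by
    rw [← Finset.sum_add_distrib]
    exact Finset.sum_congr rfl fun j _ => by omega
  have hrle : M.rank ≤ ∑ j, min (K j) n := by
    have h4 := Matrix.rank_le_card_height M
    rw [hcardR] at h4
    exact h4
  omega

end Aux
/-- for a digital `(t,m,s)`-net, `|V(u,k) ∩ P^⊥| ≤ 1` if `|k| ≤ m-t`,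
and `|V(u,k) ∩ P^⊥| ≤ b^{|k|-m+t}` if `|k| > m-t`. -/
theorem stmt7 {F : Type} [Field F] [Fintype F] {s m : ℕ}
    (φ : Fin (Fintype.card F) ≃ F) (hφ : φ ⟨0, Fintype.card_pos⟩ = 0)
    (C : Fin s → ℕ → Fin m → F) (n : ℕ) (hn : m ≤ n)
    (t : ℕ) (ht : t ≤ m) (hnet : IsDigitalTNet C n t)
    (u : Finset (Fin s)) (k : Fin s → ℕ) :
    ((∑ j ∈ u, k j) + t ≤ m →
      Set.ncard {ℓ : Fin s → ℕ | ℓ ∈ Vset (Fintype.card F) u k ∧ inDual φ C n ℓ} ≤ 1) ∧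
    (m < (∑ j ∈ u, k j) + t →
      Set.ncard {ℓ : Fin s → ℕ | ℓ ∈ Vset (Fintype.card F) u k ∧ inDual φ C n ℓ} ≤
        Fintype.card F ^ ((∑ j ∈ u, k j) + t - m)) := by
  constructor
  · intro h
    have hk := key_count φ hφ C n u k
    rw [hnet u k h, Nat.sub_self, pow_zero] at hk
    exact hk
  · intro h
    refine le_trans (key_count φ hφ C n u k) ?_
    apply Nat.pow_le_pow_right Fintype.card_pos
    -- it suffices that `rank C_{u,k} ≥ m - t`
    have hmin : m - t ≤ ∑ j ∈ u, min (k j) n := by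
      by_cases hex : ∃ j ∈ u, n ≤ k j
      · obtain ⟨j0, hj0u, hj0⟩ := hex
        calc m - t ≤ n := by omega
          _ = min (k j0) n := (min_eq_right hj0).symm
          _ ≤ ∑ j ∈ u, min (k j) n :=
            Finset.single_le_sum (f := fun j => min (k j) n) (fun j _ => Nat.zero_le _) hj0u
      · push_neg at hex
        have he : ∑ j ∈ u, min (k j) n = ∑ j ∈ u, k j :=
          Finset.sum_congr rfl fun j hj => min_eq_left (le_of_lt (hex j hj))
        omega
    obtain ⟨k', hk'1, hk'2, hk'3⟩ := exists_cut u (fun j => min (k j) n) (m - t) hmin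
    have hk'rank : (Cuk C n u k').rank = m - t := by
      have hr := hnet u k' (by rw [hk'3]; omega)
      rw [hk'3] at hr
      exact hr
    have hKK : ∀ j : Fin s, (if j ∈ u then k' j else 0) ≤ (if j ∈ u then k j else 0) := by
      intro j
      split_ifs with hj
      · exact le_trans (hk'1 j) (min_le_left _ _)
      · exact le_rfl
    have hmono : (Cuk C n u k').rank ≤ (Cuk C n u k).rank := by
      have heq : Cuk C n u k' = (Cuk C n u k).submatrix
          (fun p : (j : Fin s) × Fin (min (if j ∈ u then k' j else 0) n) =>
            (⟨p.1, ⟨(p.2 : ℕ), lt_of_lt_of_le p.2.isLt (min_le_min (hKK p.1) le_rfl)⟩⟩ :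
              (j : Fin s) × Fin (min (if j ∈ u then k j else 0) n)))
          _root_.id := rfl
      rw [heq]
      exact rank_row_select_le _ _
    omega
end

section
/- Let P be a digital net in prime power base b with generating matrices C_1,…,C_s. For any u ⊆ {1,…,s} and k ∈ ℕ₀^{|u|}, the image of the restriction of the projection proj_{u,k+1_u} (extracting the (k_j+1)-st digit of each coordinate j∈u) to V(u,k+1_u) ∩ P^⊥ is a subspace of F_b^{|u|} of dimension |u| − rank(C_{u,k+1_u}) + rank(C_{u,k}). -/
open Finset

/-!
Encode `ℓ ∈ V(u, k + 1_u)` by its vector `x` of `b`-adic digits, block `j ∈ u` holding the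
`k_j + 1` digits of `ℓ_j`. Then `ℓ ∈ P^⊥` says `C_{u,k+1_u}^⊤ x = 0`, and the projection
reads off the last digit of each block. On the kernel of `C_{u,k+1_u}^⊤`, the kernel of
the projection consists of the digit vectors with vanishing last digits, i.e. it is the
kernel of `C_{u,k}^⊤`; rank–nullity for both matrices gives the dimension.
-/

open Matrix

theorem Submodule.finrank_map_ker_add_finrank_ker_comp {K V₀ V X Y : Type*} [Field K]
    [AddCommGroup V₀] [Module K V₀] [AddCommGroup V] [Module K V] [FiniteDimensional K V]
    [AddCommGroup X] [Module K X] [AddCommGroup Y] [Module K Y]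
    (T : V →ₗ[K] X) (π : V →ₗ[K] Y) (e : V₀ →ₗ[K] V) (he : Function.Injective e)
    (hrange : LinearMap.range e = LinearMap.ker π) :
    Module.finrank K (map π (LinearMap.ker T)) + Module.finrank K (LinearMap.ker (T ∘ₗ e)) =
      Module.finrank K (LinearMap.ker T) := by
  have hker : map (LinearMap.ker T).subtype (LinearMap.ker (π ∘ₗ (LinearMap.ker T).subtype)) =
      map e (LinearMap.ker (T ∘ₗ e)) := by
    rw [LinearMap.ker_comp, map_comap_subtype, LinearMap.ker_comp, map_comap_eq, hrange, inf_comm]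
  have nullity := LinearMap.finrank_range_add_finrank_ker (π ∘ₗ (LinearMap.ker T).subtype)
  rwa [LinearMap.range_comp, range_subtype, ← finrank_map_subtype_eq, hker,
    LinearEquiv.finrank_eq (equivMapOfInjective e he _).symm] at nullity

theorem Finset.sum_range_eq_sum_range_ite_lt {M : Type*} [AddCommMonoid M] {g : ℕ → M} {L : ℕ}
    (hg : ∀ i, L ≤ i → g i = 0) (n : ℕ) :
    ∑ i ∈ range n, g i = ∑ i ∈ range L, if i < n then g i else 0 := by
  rw [← Finset.sum_filter]
  refine (Finset.sum_subset (fun i => by simp) fun i hi hi' => hg i ?_).symm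
  simp only [mem_filter, mem_range] at hi hi'
  omega

def stackRows {ι κ R : Type*} (rows : ι → ℕ → κ → R) (r : ι → ℕ) :
    Matrix (Σ i, Fin (r i)) κ R :=
  fun p => rows p.1 p.2

namespace DigitString

section

variable {K : Type*} [Field K] {ι : Type*} (r : ι → ℕ)

def appendZero : ((Σ i, Fin (r i)) → K) →ₗ[K] ((Σ i, Fin (r i + 1)) → K) :=
  LinearMap.pi fun p => Fin.lastCases 0 (fun a => LinearMap.proj ⟨p.1, a⟩) p.2

def last : ((Σ i, Fin (r i + 1)) → K) →ₗ[K] (ι → K) :=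
  LinearMap.pi fun i => LinearMap.proj ⟨i, Fin.last (r i)⟩

@[simp]
lemma appendZero_castSucc (x : (Σ i, Fin (r i)) → K) (i : ι) (a : Fin (r i)) :
    appendZero r x ⟨i, a.castSucc⟩ = x ⟨i, a⟩ := by
  simp [appendZero]

@[simp]
lemma appendZero_last (x : (Σ i, Fin (r i)) → K) (i : ι) :
    appendZero r x ⟨i, Fin.last (r i)⟩ = 0 := by
  simp [appendZero]

@[simp]
lemma last_apply (x : (Σ i, Fin (r i + 1)) → K) (i : ι) : last r x i = x ⟨i, Fin.last (r i)⟩ :=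
  rfl

lemma appendZero_injective : Function.Injective (appendZero (K := K) r) := fun x y h =>
  funext fun p => by simpa using congrFun h ⟨p.1, p.2.castSucc⟩

lemma range_appendZero : LinearMap.range (appendZero (K := K) r) = LinearMap.ker (last r) := by
  ext x
  simp only [LinearMap.mem_range, LinearMap.mem_ker]
  constructor
  · rintro ⟨x, rfl⟩
    ext i
    simp
  · intro hx
    refine ⟨fun p => x ⟨p.1, p.2.castSucc⟩, funext fun ⟨i, a⟩ => ?_⟩
    induction a using Fin.lastCases with
    | last => simpa using (congrFun hx i).symm
    | cast a => simp

end

variable {K ι κ : Type*} [Field K] [Fintype ι] (rows : ι → ℕ → κ → K) (r : ι → ℕ)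

lemma mulVec_appendZero (x : (Σ i, Fin (r i)) → K) :
    (stackRows rows fun i => r i + 1)ᵀ *ᵥ appendZero r x = (stackRows rows r)ᵀ *ᵥ x := by
  ext c
  simp [Matrix.mulVec, dotProduct, stackRows, Fintype.sum_sigma, Fin.sum_univ_castSucc]

theorem finrank_map_last_ker_add_rank [Fintype κ] :
    Module.finrank K (Submodule.map (last r)
        (LinearMap.ker (stackRows rows fun i => r i + 1)ᵀ.mulVecLin)) +
      (stackRows rows fun i => r i + 1).rank =
    Fintype.card ι + (stackRows rows r).rank := by
  have hcomp : (stackRows rows fun i => r i + 1)ᵀ.mulVecLin ∘ₗ appendZero r =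
      (stackRows rows r)ᵀ.mulVecLin :=
    LinearMap.ext (mulVec_appendZero rows r)
  have key := Submodule.finrank_map_ker_add_finrank_ker_comp
    (stackRows rows fun i => r i + 1)ᵀ.mulVecLin (last r) (appendZero r) (appendZero_injective r)
    (range_appendZero r)
  rw [hcomp] at key
  have nullity := LinearMap.finrank_range_add_finrank_ker (stackRows rows r)ᵀ.mulVecLin
  have nullity' := LinearMap.finrank_range_add_finrank_ker
    (stackRows rows fun i => r i + 1)ᵀ.mulVecLin
  rw [← Matrix.rank, Matrix.rank_transpose] at nullity nullity'
  simp only [Module.finrank_fintype_fun_eq_card, Fintype.card_sigma, Fintype.card_fin,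
    Finset.sum_add_distrib, Finset.sum_const, Finset.card_univ, smul_eq_mul, mul_one]
    at nullity nullity'
  omega

end DigitString

section Digits

variable {F : Type} [Field F] [Fintype F] (φ : Fin (Fintype.card F) ≃ F) {s : ℕ}

lemma toF_val (a : Fin (Fintype.card F)) : toF φ a = φ a := by
  simp [toF, Nat.mod_eq_of_lt a.2]

lemma toF_zero_s8 (hφ : φ ⟨0, Fintype.card_pos⟩ = 0) : toF φ 0 = 0 :=
  toF_val φ ⟨0, Fintype.card_pos⟩ ▸ hφ

lemma ndigit_eq_zero_of_lt {b ℓ i : ℕ} (h : ℓ < b ^ i) : ndigit b ℓ i = 0 := by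
  rw [ndigit, Nat.div_eq_of_lt h, Nat.zero_mod]

lemma ndigit_finFunctionFinEquiv {b L : ℕ} (f : Fin L → Fin b) (i : Fin L) :
    ndigit b (finFunctionFinEquiv f) i = f i := by
  rw [ndigit, ← finFunctionFinEquiv_symm_apply_val, Equiv.symm_apply_apply]

def digitVec (u : Finset (Fin s)) (r : u → ℕ) (ℓ : Fin s → ℕ) : (Σ j : u, Fin (r j)) → F :=
  fun p => toF φ (ndigit (Fintype.card F) (ℓ p.1) p.2)

lemma exists_digitVec_eq (u : Finset (Fin s)) (r : u → ℕ) (x : (Σ j : u, Fin (r j)) → F) :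
    ∃ ℓ : Fin s → ℕ, (∀ j ∉ u, ℓ j = 0) ∧ (∀ j : u, ℓ j < Fintype.card F ^ r j) ∧
      digitVec φ u r ℓ = x := by
  refine ⟨fun j => if h : j ∈ u then finFunctionFinEquiv fun i => φ.symm (x ⟨⟨j, h⟩, i⟩) else 0,
    fun j hj => dif_neg hj, fun j => ?_, funext fun ⟨j, i⟩ => ?_⟩
  · simp only [dif_pos j.2]
    exact (finFunctionFinEquiv _).2
  · simp only [digitVec, dif_pos j.2, ndigit_finFunctionFinEquiv, toF_val, Equiv.apply_symm_apply]

end Digits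

section DualNet

variable {F : Type} [Field F] [Fintype F] {s m : ℕ}

-- Zero rows stand in for `C j i`, `i ≥ n`, ignored by `inDual` and `Cuk`: this way block `j`
-- has one row per digit of `ℓ_j` whatever `n` is.
def truncRows (C : Fin s → ℕ → Fin m → F) (n : ℕ) : Fin s → ℕ → Fin m → F :=
  fun j i => if i < n then C j i else 0

lemma inDual_iff_mulVec_digitVec_eq_zero (φ : Fin (Fintype.card F) ≃ F)
    (hφ : φ ⟨0, Fintype.card_pos⟩ = 0) (C : Fin s → ℕ → Fin m → F) (n : ℕ)
    (u : Finset (Fin s)) (r : u → ℕ) {ℓ : Fin s → ℕ} (h0 : ∀ j ∉ u, ℓ j = 0)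
    (hlt : ∀ j : u, ℓ j < Fintype.card F ^ r j) :
    inDual φ C n ℓ ↔
      (stackRows (fun j : u => truncRows C n j) r)ᵀ *ᵥ digitVec φ u r ℓ = 0 := by
  have hcol : ∀ c, ((stackRows (fun j : u => truncRows C n j) r)ᵀ *ᵥ digitVec φ u r ℓ) c =
      ∑ j, ∑ i ∈ range n, C j i c * toF φ (ndigit (Fintype.card F) (ℓ j) i) := by
    intro c
    rw [← Finset.sum_subset (subset_univ u) fun j _ hj => Finset.sum_eq_zero fun i _ => by
      rw [h0 j hj, ndigit_eq_zero_of_lt (pow_pos Fintype.card_pos i), toF_zero_s8 φ hφ, mul_zero],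
      ← Finset.sum_coe_sort u]
    simp only [Matrix.mulVec, dotProduct, Matrix.transpose_apply, stackRows, digitVec,
      Fintype.sum_sigma]
    refine Finset.sum_congr rfl fun j _ => ?_
    rw [Finset.sum_range_eq_sum_range_ite_lt (L := r j) (fun i hi => by
      rw [ndigit_eq_zero_of_lt ((hlt j).trans_le (Nat.pow_le_pow_right Fintype.card_pos hi)),
        toF_zero_s8 φ hφ, mul_zero]), ← Fin.sum_univ_eq_sum_range]
    refine Finset.sum_congr rfl fun i _ => ?_
    by_cases hin : (i : ℕ) < n <;> simp [truncRows, hin]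
  simp only [inDual, funext_iff, hcol, Pi.zero_apply]

lemma rank_stackRows_truncRows (C : Fin s → ℕ → Fin m → F) (n : ℕ) (u : Finset (Fin s))
    (k : Fin s → ℕ) (r : u → ℕ) (hr : ∀ j : u, r j = k j) :
    (stackRows (fun j : u => truncRows C n j) r).rank = (Cuk C n u k).rank := by
  have hspan : Submodule.span F (Set.range (stackRows (fun j : u => truncRows C n j) r).row) =
      Submodule.span F (Set.range (Cuk C n u k).row) := by
    apply le_antisymm
    · refine le_of_le_of_eq (Submodule.span_mono ?_) Submodule.span_insert_zero
      rintro _ ⟨⟨j, i, hi⟩, rfl⟩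
      by_cases hin : i < n
      · refine Or.inr ⟨⟨j, i, ?_⟩, ?_⟩
        · rw [if_pos j.2]
          exact lt_min (hr j ▸ hi) hin
        · exact funext fun c => by simp [Matrix.row, stackRows, truncRows, Cuk, hin]
      · exact Or.inl (by simp [Matrix.row, stackRows, truncRows, hin])
    · refine Submodule.span_mono ?_
      rintro _ ⟨⟨j, i, hi⟩, rfl⟩
      have hj : j ∈ u := by
        by_contra hj
        simp [hj] at hi
      rw [if_pos hj, lt_min_iff] at hi
      exact ⟨⟨⟨j, hj⟩, i, hr ⟨j, hj⟩ ▸ hi.1⟩,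
        funext fun c => by simp [Matrix.row, stackRows, truncRows, Cuk, hi.2]⟩
  rw [Matrix.rank_eq_finrank_span_row, Matrix.rank_eq_finrank_span_row, hspan]

end DualNet

lemma mem_Vset_plusOne_iff {b s : ℕ} {u : Finset (Fin s)} {k ℓ : Fin s → ℕ} :
    ℓ ∈ Vset b u (plusOne k u) ↔ (∀ j ∉ u, ℓ j = 0) ∧ ∀ j : u, ℓ j < b ^ (k j + 1) := by
  simp only [Vset, plusOne, Fintype.mem_piFinset, mem_range]
  constructor
  · intro h
    exact ⟨fun j hj => by simpa [hj] using h j, fun j => by simpa [j.2] using h j⟩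
  · rintro ⟨h0, hlt⟩ j
    by_cases hj : j ∈ u
    · simpa [hj] using hlt ⟨j, hj⟩
    · simp [hj, h0 j hj]

theorem stmt8_general {F : Type} [Field F] [Fintype F] {s m : ℕ}
    (φ : Fin (Fintype.card F) ≃ F) (hφ : φ ⟨0, Fintype.card_pos⟩ = 0)
    (C : Fin s → ℕ → Fin m → F) (n : ℕ)
    (u : Finset (Fin s)) (k : Fin s → ℕ) :
    ∃ W : Submodule F ({j : Fin s // j ∈ u} → F),
      (W : Set ({j : Fin s // j ∈ u} → F)) =
        {y | ∃ ℓ : Fin s → ℕ, ℓ ∈ Vset (Fintype.card F) u (plusOne k u) ∧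
          inDual φ C n ℓ ∧
          ∀ j : {j : Fin s // j ∈ u},
            y j = toF φ (ndigit (Fintype.card F) (ℓ (j : Fin s)) (k (j : Fin s)))} ∧
      Module.finrank F W =
        u.card + (Cuk C n u k).rank - (Cuk C n u (plusOne k u)).rank := by
  let rows := fun j : u => truncRows C n j
  refine ⟨Submodule.map (DigitString.last fun j : u => k j)
    (LinearMap.ker (stackRows rows fun j => k j + 1)ᵀ.mulVecLin), ?_, ?_⟩
  · ext y
    simp only [SetLike.mem_coe, Submodule.mem_map, LinearMap.mem_ker, Matrix.mulVecLin_apply,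
      mem_Vset_plusOne_iff, Set.mem_ofPred_eq]
    constructor
    · rintro ⟨x, hx, rfl⟩
      obtain ⟨ℓ, h0, hlt, rfl⟩ := exists_digitVec_eq φ u _ x
      exact ⟨ℓ, ⟨h0, hlt⟩, (inDual_iff_mulVec_digitVec_eq_zero φ hφ C n u _ h0 hlt).2 hx,
        fun j => rfl⟩
    · rintro ⟨ℓ, ⟨h0, hlt⟩, hdual, hy⟩
      exact ⟨digitVec φ u _ ℓ, (inDual_iff_mulVec_digitVec_eq_zero φ hφ C n u _ h0 hlt).1 hdual,
        funext fun j => (hy j).symm⟩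
  · have key := DigitString.finrank_map_last_ker_add_rank rows fun j => k j
    rw [rank_stackRows_truncRows C n u k _ fun _ => rfl,
      rank_stackRows_truncRows C n u (plusOne k u) _ fun j => (if_pos j.2).symm,
      Fintype.card_coe] at key
    omega

/-- the image of the restriction of `proj_{u,k+1_u}` (extracting the
`(k_j+1)`-st digit for `j ∈ u`) to `V(u,k+1_u) ∩ P^⊥` is a subspace of `F^{|u|}` of
dimension `|u| - rank(C_{u,k+1_u}) + rank(C_{u,k})`. -/
theorem stmt8 {F : Type} [Field F] [Fintype F] {s m : ℕ}
    (φ : Fin (Fintype.card F) ≃ F) (hφ : φ ⟨0, Fintype.card_pos⟩ = 0)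
    (C : Fin s → ℕ → Fin m → F) (n : ℕ) (hn : m ≤ n)
    (u : Finset (Fin s)) (k : Fin s → ℕ) :
    ∃ W : Submodule F ({j : Fin s // j ∈ u} → F),
      (W : Set ({j : Fin s // j ∈ u} → F)) =
        {y | ∃ ℓ : Fin s → ℕ, ℓ ∈ Vset (Fintype.card F) u (plusOne k u) ∧
          inDual φ C n ℓ ∧
          ∀ j : {j : Fin s // j ∈ u},
            y j = toF φ (ndigit (Fintype.card F) (ℓ (j : Fin s)) (k (j : Fin s)))} ∧
      Module.finrank F W =
        u.card + (Cuk C n u k).rank - (Cuk C n u (plusOne k u)).rank :=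
  stmt8_general φ hφ C n u k
end

section
/- Let P be a digital (t,m,s)-net in prime power base b with N = b^m points. Then for any nonempty u ⊆ {1,…,s} and k ∈ ℕ₀^{|u|}, |A(u, k+1_u) ∩ P^⊥| = 0 if |k| ≤ m−t−|u|; |A(u,k+1_u) ∩ P^⊥| ≤ (b−1)^{|u|+|k|−(m−t)} if m−t−|u| < |k| ≤ m−t; and |A(u,k+1_u) ∩ P^⊥| ≤ (b−1)^{|u|} b^{|k|−(m−t)} if |k| > m−t. -/
open Finset

/-!
If `ℓ, ℓ' ∈ P^⊥` agree outside `u` and in the digits of index `≥ k'_j` of `ℓ_j` for `j ∈ u`,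
the difference of their digit vectors is a vanishing combination of the rows of `C_{u,k'}`.
For `|k'| + t ≤ m` these rows are linearly independent, so `ℓ = ℓ'`. Hence
`ℓ ↦ (⌊ℓ_j / b^{k'_j}⌋)_j` is injective on `A(u, k + 1_u) ∩ P^⊥`, whose size is therefore at most
`∏_{j ∈ u} (⌊b^{k_j+1} / b^{k'_j}⌋ - ⌊b^{k_j} / b^{k'_j}⌋)`. Taking `k' = k + 1_v` with
`|v| = m - t - |k|`, resp. `k' ≤ k` with `|k'| = m - t`, gives the two bounds; for `k' = k + 1_u`
the injection forces `ℓ = 0 ∉ A(u, k + 1_u)`.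
-/

lemma ndigit_div_pow (b a k i : ℕ) : ndigit b (a / b ^ k) i = ndigit b a (k + i) := by
  simp [ndigit, Nat.div_div_eq_div_mul, ← pow_add]

lemma mod_pow_eq_sum_ndigit (b a N : ℕ) :
    a % b ^ N = ∑ i ∈ range N, ndigit b a i * b ^ i := by
  induction N with
  | zero => simp [Nat.mod_one]
  | succ N ih =>
    rw [sum_range_succ, ← ih, pow_succ, Nat.mod_mul, ndigit]
    ring

lemma eq_of_ndigit_eq_of_div_eq {b a a' N : ℕ} (hdig : ∀ i < N, ndigit b a i = ndigit b a' i)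
    (hdiv : a / b ^ N = a' / b ^ N) : a = a' := by
  rw [← Nat.div_add_mod a (b ^ N), ← Nat.div_add_mod a' (b ^ N), hdiv,
    mod_pow_eq_sum_ndigit, mod_pow_eq_sum_ndigit]
  congr 1
  exact sum_congr rfl fun i hi => by rw [hdig i (mem_range.1 hi)]

lemma exists_le_sum_eq {ι : Type*} [DecidableEq ι] (u : Finset ι) (k : ι → ℕ) {r : ℕ}
    (hr : r ≤ ∑ j ∈ u, k j) : ∃ k' ≤ k, ∑ j ∈ u, k' j = r := by
  induction r with
  | zero => exact ⟨0, fun _ => Nat.zero_le _, by simp⟩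
  | succ r ih =>
    obtain ⟨k', hle, hsum⟩ := ih (by omega)
    obtain ⟨j₀, hj₀, hlt⟩ : ∃ j ∈ u, k' j < k j := by
      by_contra! hcon
      have := sum_le_sum hcon
      omega
    refine ⟨Function.update k' j₀ (k' j₀ + 1), fun j => ?_, ?_⟩
    · rcases eq_or_ne j j₀ with rfl | h
      · simpa using hlt
      · simpa [h] using hle j
    · rw [sum_update_of_mem hj₀, sdiff_singleton_eq_erase, ← hsum, ← add_sum_erase u k' hj₀]
      ring

lemma le_of_sum_add_le {ι : Type*} {u : Finset ι} {k : ι → ℕ} {t m n : ℕ} (hn : m ≤ n)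
    (hsum : ∑ j ∈ u, k j + t ≤ m) {j : ι} (hj : j ∈ u) : k j ≤ n :=
  (single_le_sum (fun _ _ => Nat.zero_le _) hj).trans (by omega)

lemma sum_plusOne {s : ℕ} (k : Fin s → ℕ) {u v : Finset (Fin s)} (hv : v ⊆ u) :
    ∑ j ∈ u, plusOne k v j = ∑ j ∈ u, k j + v.card := by
  have hk : ∀ j, plusOne k v j = k j + if j ∈ v then 1 else 0 := fun j => by
    unfold plusOne; split_ifs <;> rfl
  rw [sum_congr rfl fun j _ => hk j, sum_add_distrib, sum_boole, filter_mem_eq_inter,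
    inter_eq_right.2 hv, Nat.cast_id]

lemma mem_Aset_plusOne_iff {b s : ℕ} {u : Finset (Fin s)} {k ℓ : Fin s → ℕ} :
    ℓ ∈ Aset b u (plusOne k u) ↔
      (∀ j ∈ u, ℓ j ∈ Ico (b ^ k j) (b ^ (k j + 1))) ∧ ∀ j ∉ u, ℓ j = 0 := by
  rw [Aset, mem_filter, Vset, Fintype.mem_piFinset]
  simp only [plusOne, mem_range, mem_Ico]
  grind

lemma div_pow_mem_Ico {b k k' x : ℕ} (hk' : k' ≤ k + 1) (hx : x ∈ Ico (b ^ k) (b ^ (k + 1))) :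
    x / b ^ k' ∈ Ico (b ^ k / b ^ k') (b ^ (k + 1) / b ^ k') :=
  mem_Ico.2 ⟨Nat.div_le_div_right (mem_Ico.1 hx).1,
    Nat.div_lt_div_of_lt_of_dvd (pow_dvd_pow b hk') (mem_Ico.1 hx).2⟩

lemma pow_succ_div_pow_succ_sub_pow_div_pow_succ {b : ℕ} (hb : 1 < b) (k : ℕ) :
    b ^ (k + 1) / b ^ (k + 1) - b ^ k / b ^ (k + 1) = 1 := by
  rw [Nat.div_self (by positivity), Nat.div_eq_of_lt (Nat.pow_lt_pow_right hb k.lt_succ_self)]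

lemma pow_succ_div_pow_sub_pow_div_pow {b k k' : ℕ} (hb : 0 < b) (hk' : k' ≤ k) :
    b ^ (k + 1) / b ^ k' - b ^ k / b ^ k' = (b - 1) * b ^ (k - k') := by
  rw [Nat.pow_div (by omega) hb, Nat.pow_div hk' hb, show k + 1 - k' = k - k' + 1 by omega,
    pow_succ, Nat.sub_one_mul, mul_comm]

section FiniteField

variable {F : Type} [Field F] [Fintype F] (φ : Fin (Fintype.card F) ≃ F)

lemma toF_eq_toF_iff {a a' : ℕ} :
    toF φ a = toF φ a' ↔ a % Fintype.card F = a' % Fintype.card F := by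
  simp [toF, Fin.ext_iff]

lemma toF_ndigit_inj {a a' i : ℕ}
    (h : toF φ (ndigit (Fintype.card F) a i) = toF φ (ndigit (Fintype.card F) a' i)) :
    ndigit (Fintype.card F) a i = ndigit (Fintype.card F) a' i := by
  simpa [toF_eq_toF_iff, ndigit] using h

lemma inDual_zero (hφ : φ ⟨0, Fintype.card_pos⟩ = 0) {s m : ℕ} (C : Fin s → ℕ → Fin m → F)
    (n : ℕ) : inDual φ C n 0 := by
  have h0 : toF φ 0 = 0 := by simpa [toF] using hφ
  intro c
  simp [ndigit, h0]

end FiniteField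

def AsetInterDual {F : Type} [Field F] [Fintype F] {s m : ℕ} (φ : Fin (Fintype.card F) ≃ F)
    (C : Fin s → ℕ → Fin m → F) (n : ℕ) (u : Finset (Fin s)) (k : Fin s → ℕ) :
    Set (Fin s → ℕ) :=
  {ℓ | ℓ ∈ Aset (Fintype.card F) u (plusOne k u) ∧ inDual φ C n ℓ}

namespace IsDigitalTNet

variable {F : Type} [Field F] [Fintype F] {s m : ℕ} {C : Fin s → ℕ → Fin m → F} {n t : ℕ}
  {u : Finset (Fin s)} {k : Fin s → ℕ}

lemma linearIndependent_Cuk (hnet : IsDigitalTNet C n t) (hn : m ≤ n)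
    (hsum : ∑ j ∈ u, k j + t ≤ m) : LinearIndependent F (Cuk C n u k) := by
  refine linearIndependent_iff_card_eq_finrank_span.2 ?_
  have hrank : (Cuk C n u k).rank = Set.finrank F (Set.range (Cuk C n u k)) :=
    Matrix.rank_eq_finrank_span_row _
  rw [← hrank, hnet u k hsum, Fintype.card_sigma,
    ← sum_subset (subset_univ u) (fun j _ hj => by simp [hj])]
  exact sum_congr rfl fun j hj => by simp [hj, le_of_sum_add_le hn hsum hj]

lemma eq_zero_of_sum_mul_eq_zero (hnet : IsDigitalTNet C n t) (hn : m ≤ n)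
    (hsum : ∑ j ∈ u, k j + t ≤ m) {D : Fin s → ℕ → F}
    (hD : ∀ j i, D j i ≠ 0 → j ∈ u ∧ i < k j)
    (h : ∀ c, ∑ j, ∑ i ∈ range n, C j i c * D j i = 0) : D = 0 := by
  have hrows : ∑ p, D p.1 p.2 • Cuk C n u k p = 0 := by
    ext c
    rw [Pi.zero_apply, ← h c, Finset.sum_apply, ← univ_sigma_univ, sum_sigma]
    refine sum_congr rfl fun j _ => ?_
    calc ∑ i : Fin (min (if j ∈ u then k j else 0) n), (D j i • Cuk C n u k ⟨j, i⟩) c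
        = ∑ i ∈ range (min (if j ∈ u then k j else 0) n), C j i c * D j i := by
          rw [← Fin.sum_univ_eq_sum_range]
          simp [Cuk, mul_comm]
      _ = ∑ i ∈ range n, C j i c * D j i := by
          refine sum_subset (range_subset_range.2 (min_le_right _ _)) fun i _ hi => ?_
          by_contra hji
          obtain ⟨hj, hik⟩ := hD j i (right_ne_zero_of_mul hji)
          simp_all
  have := Fintype.linearIndependent_iff.1 (hnet.linearIndependent_Cuk hn hsum) _ hrows
  funext j i
  by_contra hji
  obtain ⟨hj, hi⟩ := hD j i hji
  exact hji (this ⟨j, i, by simp [hj, hi, le_of_sum_add_le hn hsum hj]⟩)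

lemma eq_of_inDual (hnet : IsDigitalTNet C n t) (hn : m ≤ n) (hsum : ∑ j ∈ u, k j + t ≤ m)
    (φ : Fin (Fintype.card F) ≃ F) {ℓ ℓ' : Fin s → ℕ} (hℓ : inDual φ C n ℓ)
    (hℓ' : inDual φ C n ℓ') (hout : ∀ j ∉ u, ℓ j = ℓ' j)
    (hdiv : ∀ j ∈ u, ℓ j / Fintype.card F ^ k j = ℓ' j / Fintype.card F ^ k j) : ℓ = ℓ' := by
  have hdigits : ∀ j i, ndigit (Fintype.card F) (ℓ j) i = ndigit (Fintype.card F) (ℓ' j) i := by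
    let D : Fin s → ℕ → F := fun j i =>
      toF φ (ndigit (Fintype.card F) (ℓ j) i) - toF φ (ndigit (Fintype.card F) (ℓ' j) i)
    have hD : ∀ j i, D j i ≠ 0 → j ∈ u ∧ i < k j := by
      intro j i hji
      by_contra! hhigh
      refine hji (sub_eq_zero.2 (congrArg (toF φ) ?_))
      by_cases hj : j ∈ u
      · obtain ⟨i', rfl⟩ := Nat.exists_eq_add_of_le (hhigh hj)
        rw [← ndigit_div_pow, ← ndigit_div_pow, hdiv j hj]
      · rw [hout j hj]
    have hD0 : D = 0 := hnet.eq_zero_of_sum_mul_eq_zero hn hsum hD fun c => by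
      simp only [D, mul_sub, sum_sub_distrib, hℓ c, hℓ' c, sub_zero]
    exact fun j i => toF_ndigit_inj φ (sub_eq_zero.1 (congrFun (congrFun hD0 j) i))
  funext j
  by_cases hj : j ∈ u
  · exact eq_of_ndigit_eq_of_div_eq (fun i _ => hdigits j i) (hdiv j hj)
  · exact hout j hj

lemma ncard_AsetInterDual_le_prod (hnet : IsDigitalTNet C n t) (hn : m ≤ n)
    (φ : Fin (Fintype.card F) ≃ F) {k' : Fin s → ℕ} (hk' : ∀ j ∈ u, k' j ≤ k j + 1)
    (hsum : ∑ j ∈ u, k' j + t ≤ m) :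
    (AsetInterDual φ C n u k).ncard ≤ ∏ j ∈ u,
      (Fintype.card F ^ (k j + 1) / Fintype.card F ^ k' j -
        Fintype.card F ^ k j / Fintype.card F ^ k' j) := by
  let box : Finset (Fin s → ℕ) := Fintype.piFinset fun j => if j ∈ u then
    Ico (Fintype.card F ^ k j / Fintype.card F ^ k' j)
      (Fintype.card F ^ (k j + 1) / Fintype.card F ^ k' j) else {0}
  calc (AsetInterDual φ C n u k).ncard ≤ (box : Set (Fin s → ℕ)).ncard := by
        refine Set.ncard_le_ncard_of_injOn (fun ℓ j => ℓ j / Fintype.card F ^ k' j) ?_ ?_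
          box.finite_toSet
        · rintro ℓ ⟨hA, -⟩
          obtain ⟨hmem, hzero⟩ := mem_Aset_plusOne_iff.1 hA
          rw [mem_coe, Fintype.mem_piFinset]
          intro j
          by_cases hj : j ∈ u
          · simpa [hj] using div_pow_mem_Ico (hk' j hj) (hmem j hj)
          · simp [hj, hzero j hj]
        · rintro ℓ ⟨hA, hℓ⟩ ℓ' ⟨hA', hℓ'⟩ hquot
          exact hnet.eq_of_inDual hn hsum φ hℓ hℓ'
            (fun j hj => ((mem_Aset_plusOne_iff.1 hA).2 j hj).trans
              ((mem_Aset_plusOne_iff.1 hA').2 j hj).symm)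
            fun j _ => congrFun hquot j
    _ = _ := by
        rw [Set.ncard_coe_finset, Fintype.card_piFinset]
        simp [apply_ite card, prod_ite_mem]

theorem ncard_AsetInterDual_eq_zero (hnet : IsDigitalTNet C n t) (hn : m ≤ n)
    (φ : Fin (Fintype.card F) ≃ F) (hφ : φ ⟨0, Fintype.card_pos⟩ = 0) (hu : u.Nonempty)
    (h : ∑ j ∈ u, k j + t + u.card ≤ m) : (AsetInterDual φ C n u k).ncard = 0 := by
  suffices AsetInterDual φ C n u k = ∅ by rw [this, Set.ncard_empty]
  refine Set.eq_empty_iff_forall_notMem.2 fun ℓ ⟨hA, hℓ⟩ => ?_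
  obtain ⟨hmem, hzero⟩ := mem_Aset_plusOne_iff.1 hA
  have hℓ0 : ℓ = 0 := by
    refine hnet.eq_of_inDual hn (k := plusOne k u) (by rw [sum_plusOne k subset_rfl]; omega) φ
      hℓ (inDual_zero φ hφ C n) hzero fun j hj => ?_
    rw [plusOne, if_pos hj, Pi.zero_apply, Nat.zero_div,
      Nat.div_eq_of_lt (mem_Ico.1 (hmem j hj)).2]
  obtain ⟨j, hj⟩ := hu
  have := (mem_Ico.1 (hmem j hj)).1
  simp [hℓ0] at this

theorem ncard_AsetInterDual_le_pow (hnet : IsDigitalTNet C n t) (hn : m ≤ n)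
    (φ : Fin (Fintype.card F) ≃ F) (h : ∑ j ∈ u, k j + t ≤ m) :
    (AsetInterDual φ C n u k).ncard ≤
      (Fintype.card F - 1) ^ (u.card + ∑ j ∈ u, k j + t - m) := by
  obtain ⟨v, hvu, hv⟩ := exists_subset_card_eq (min_le_right (m - t - ∑ j ∈ u, k j) u.card)
  have hsum : ∑ j ∈ u, plusOne k v j + t ≤ m := by rw [sum_plusOne k hvu]; omega
  have hfactor : ∀ j ∈ u, Fintype.card F ^ (k j + 1) / Fintype.card F ^ plusOne k v j -
      Fintype.card F ^ k j / Fintype.card F ^ plusOne k v j =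
        if j ∈ v then 1 else Fintype.card F - 1 := fun j _ => by
    by_cases hj : j ∈ v
    · simp only [plusOne, if_pos hj]
      exact pow_succ_div_pow_succ_sub_pow_div_pow_succ Fintype.one_lt_card _
    · simp only [plusOne, if_neg hj]
      simpa using pow_succ_div_pow_sub_pow_div_pow Fintype.card_pos le_rfl
  calc (AsetInterDual φ C n u k).ncard
      ≤ ∏ j ∈ u, (if j ∈ v then 1 else Fintype.card F - 1) := by
        rw [← prod_congr rfl hfactor]
        refine hnet.ncard_AsetInterDual_le_prod hn φ (fun j _ => ?_) hsum
        unfold plusOne; split_ifs <;> omega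
    _ = (Fintype.card F - 1) ^ (u.card + ∑ j ∈ u, k j + t - m) := by
        rw [← prod_sdiff hvu, prod_eq_one fun j hj => if_pos hj,
          prod_congr rfl fun j hj => if_neg (mem_sdiff.1 hj).2, prod_const,
          card_sdiff_of_subset hvu, mul_one]
        congr 1
        omega

theorem ncard_AsetInterDual_le_pow_mul_pow (hnet : IsDigitalTNet C n t) (hn : m ≤ n)
    (φ : Fin (Fintype.card F) ≃ F) (ht : t ≤ m) :
    (AsetInterDual φ C n u k).ncard ≤
      (Fintype.card F - 1) ^ u.card * Fintype.card F ^ (∑ j ∈ u, k j + t - m) := by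
  obtain ⟨k', hk'k, hk'⟩ := exists_le_sum_eq u k (min_le_right (m - t) (∑ j ∈ u, k j))
  calc (AsetInterDual φ C n u k).ncard
      ≤ ∏ j ∈ u, (Fintype.card F - 1) * Fintype.card F ^ (k j - k' j) := by
        rw [← prod_congr rfl fun j _ =>
          pow_succ_div_pow_sub_pow_div_pow Fintype.card_pos (hk'k j)]
        exact hnet.ncard_AsetInterDual_le_prod hn φ (fun j _ => (hk'k j).trans (Nat.le_succ _))
          (by omega)
    _ = (Fintype.card F - 1) ^ u.card * Fintype.card F ^ (∑ j ∈ u, k j + t - m) := by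
        rw [prod_mul_distrib, prod_const, prod_pow_eq_pow_sum,
          sum_tsub_distrib _ fun j _ => hk'k j]
        congr 2
        omega

end IsDigitalTNet

/-- for a digital `(t,m,s)`-net, `|A(u,k+1_u) ∩ P^⊥| = 0` if
`|k| ≤ m-t-|u|`, `≤ (b-1)^{|u|+|k|-(m-t)}` if `m-t-|u| < |k| ≤ m-t`, and
`≤ (b-1)^{|u|} b^{|k|-(m-t)}` if `|k| > m-t`. -/
theorem stmt11 {F : Type} [Field F] [Fintype F] {s m : ℕ}
    (φ : Fin (Fintype.card F) ≃ F) (hφ : φ ⟨0, Fintype.card_pos⟩ = 0)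
    (C : Fin s → ℕ → Fin m → F) (n : ℕ) (hn : m ≤ n)
    (t : ℕ) (ht : t ≤ m) (hnet : IsDigitalTNet C n t)
    (u : Finset (Fin s)) (hu : u.Nonempty) (k : Fin s → ℕ) :
    ((∑ j ∈ u, k j) + t + u.card ≤ m →
      Set.ncard {ℓ : Fin s → ℕ |
        ℓ ∈ Aset (Fintype.card F) u (plusOne k u) ∧ inDual φ C n ℓ} = 0) ∧
    (m < (∑ j ∈ u, k j) + t + u.card → (∑ j ∈ u, k j) + t ≤ m →
      Set.ncard {ℓ : Fin s → ℕ |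
        ℓ ∈ Aset (Fintype.card F) u (plusOne k u) ∧ inDual φ C n ℓ} ≤
      (Fintype.card F - 1) ^ (u.card + (∑ j ∈ u, k j) + t - m)) ∧
    (m < (∑ j ∈ u, k j) + t →
      Set.ncard {ℓ : Fin s → ℕ |
        ℓ ∈ Aset (Fintype.card F) u (plusOne k u) ∧ inDual φ C n ℓ} ≤
      (Fintype.card F - 1) ^ u.card * Fintype.card F ^ ((∑ j ∈ u, k j) + t - m)) :=
  ⟨hnet.ncard_AsetInterDual_eq_zero hn φ hφ hu,
    fun _ => hnet.ncard_AsetInterDual_le_pow hn φ,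
    fun _ => hnet.ncard_AsetInterDual_le_pow_mul_pow hn φ ht⟩
end

section
/- Let P be a digital (t,m,s)-net in base 2 with generating matrices C_1,…,C_s. Then every gain coefficient Γ_{u,k} is either 0 or equal to 2^{m−rank(C_{u,k})}; in particular every nonzero gain coefficient is a power of 2. -/
open Finset

/-!
Index the `2^m` net points by the digit vectors `v ∈ F^m` of their indices. The `j`-th
coordinates of two points share their first `r` digits iff the first `min r n` rows of `C_j`
vanish on the difference `w` of the digit vectors, so every summand of `Γ_{u,k}` depends on `w`
only and the double sum collapses to a single sum over `w ∈ F^m`. In base `2` the factor of a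
coordinate `j ∈ u` vanishes unless the first `k_j` rows of `C_j` kill `w`, and is then `±1`
according to the next row. Hence the summand is the indicator of `ker C_{u,k}` times the
character `c ↦ (-1)^c` of a linear functional, and a character sum over the subspace
`ker C_{u,k}` is either `0` or its cardinality `2^(m - rank C_{u,k})`.
-/

noncomputable def baseExpansion (b : ℕ) (d : ℕ → ℕ) (n : ℕ) : ℝ :=
  ∑ i ∈ range n, (d i : ℝ) / (b : ℝ) ^ (i + 1)

namespace baseExpansion

variable {b : ℕ} {d d' : ℕ → ℕ} {n r : ℕ}

@[simp] lemma zero : baseExpansion b d 0 = 0 := rfl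

lemma succ :
    baseExpansion b d (n + 1) = (d 0 + baseExpansion b (fun i => d (i + 1)) n) / b := by
  simp only [baseExpansion, sum_range_succ', add_div, sum_div, div_div, pow_succ]
  ring

lemma nonneg : 0 ≤ baseExpansion b d n :=
  sum_nonneg fun _ _ => by positivity

lemma lt_one (hd : ∀ i, d i < b) : baseExpansion b d n < 1 := by
  induction n generalizing d with
  | zero => simp
  | succ n ih =>
    have hb : (0 : ℝ) < b := by exact_mod_cast (Nat.zero_le _).trans_lt (hd 0)
    have hd0 : (d 0 : ℝ) + 1 ≤ b := by exact_mod_cast hd 0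
    rw [succ, div_lt_one hb]
    linarith [ih fun i => hd (i + 1)]

lemma floor_pow_succ_mul_succ (hb : b ≠ 0) :
    ⌊(b : ℝ) ^ (r + 1) * baseExpansion b d (n + 1)⌋ =
      (b ^ r * d 0 : ℤ) + ⌊(b : ℝ) ^ r * baseExpansion b (fun i => d (i + 1)) n⌋ := by
  rw [succ, ← Int.floor_intCast_add]
  congr 1
  have : (b : ℝ) ≠ 0 := by exact_mod_cast hb
  push_cast
  field_simp
  ring

theorem floor_pow_mul_eq_iff (hd : ∀ i, d i < b) (hd' : ∀ i, d' i < b) :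
    ⌊(b : ℝ) ^ r * baseExpansion b d n⌋ = ⌊(b : ℝ) ^ r * baseExpansion b d' n⌋ ↔
      ∀ i < min r n, d i = d' i := by
  induction n generalizing r d d' with
  | zero => simp
  | succ n ih =>
    cases r with
    | zero =>
      have h (e : ℕ → ℕ) (he : ∀ i, e i < b) : ⌊baseExpansion b e (n + 1)⌋ = 0 :=
        Int.floor_eq_zero_iff.mpr ⟨nonneg, lt_one he⟩
      simp [h d hd, h d' hd']
    | succ r =>
      have hb : b ≠ 0 := (Nat.zero_lt_of_lt (hd 0)).ne'
      have hbr : (0 : ℤ) < b ^ r := by positivity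
      have hfrac (e : ℕ → ℕ) (he : ∀ i, e i < b) :
          0 ≤ ⌊(b : ℝ) ^ r * baseExpansion b e n⌋ ∧
            ⌊(b : ℝ) ^ r * baseExpansion b e n⌋ < b ^ r := by
        constructor
        · exact Int.floor_nonneg.mpr (mul_nonneg (by positivity) nonneg)
        · rw [Int.floor_lt]
          push_cast
          exact mul_lt_of_lt_one_right (by positivity) (lt_one he)
      rw [floor_pow_succ_mul_succ hb, floor_pow_succ_mul_succ hb, Nat.succ_min_succ,
        Nat.forall_lt_succ_left, ← ih (fun i => hd (i + 1)) (fun i => hd' (i + 1))]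
      have hdiv (q a : ℤ) (ha : 0 ≤ a ∧ a < b ^ r) :
          (b ^ r * q + a) / b ^ r = q ∧ (b ^ r * q + a) % b ^ r = a :=
        (Int.ediv_emod_unique hbr).mpr ⟨add_comm _ _, ha⟩
      constructor
      · intro h
        obtain ⟨hq, hr⟩ := hdiv (d 0) _ (hfrac _ fun i => hd (i + 1))
        obtain ⟨hq', hr'⟩ := hdiv (d' 0) _ (hfrac _ fun i => hd' (i + 1))
        rw [h] at hq hr
        exact ⟨by exact_mod_cast hq.symm.trans hq', hr.symm.trans hr'⟩
      · rintro ⟨h0, h⟩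
        rw [h0, h]

end baseExpansion

open Matrix

lemma Nat.forall_lt_min_succ_iff {p : ℕ → Prop} {K n : ℕ} :
    (∀ a < min (K + 1) n, p a) ↔ (∀ a < min K n, p a) ∧ (K < n → p K) := by
  constructor
  · intro h
    exact ⟨fun a ha => h a (by omega), fun hK => h K (by omega)⟩
  · rintro ⟨h, hK⟩ a ha
    rcases Nat.lt_or_eq_of_le (show a ≤ K by omega) with ha' | rfl
    · exact h a (by omega)
    · exact hK (by omega)

lemma AddChar.map_sum_eq_prod {ι A M : Type*} [AddCommMonoid A] [CommMonoid M]
    (ψ : AddChar A M) (s : Finset ι) (f : ι → A) : ψ (∑ i ∈ s, f i) = ∏ i ∈ s, ψ (f i) := by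
  classical
  induction s using Finset.induction_on with
  | empty => simp
  | insert i s hi ih => rw [sum_insert hi, prod_insert hi, ψ.map_add_eq_mul, ih]

section FiniteField

variable {F : Type*} [Field F] [Fintype F]

theorem Matrix.natCard_ker_mulVecLin {ι κ : Type*} [Fintype κ] (M : Matrix ι κ F) :
    Nat.card (LinearMap.ker M.mulVecLin) = Fintype.card F ^ (Fintype.card κ - M.rank) := by
  classical
  have h := LinearMap.finrank_range_add_finrank_ker M.mulVecLin
  rw [Module.finrank_fintype_fun_eq_card] at h
  rw [Nat.card_eq_fintype_card, Module.card_eq_pow_finrank (K := F), Matrix.rank]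
  congr 1
  omega

open Classical in
theorem Matrix.sum_ite_mulVec_eq_zero_or {ι κ R : Type*} [Fintype κ] [DecidableEq κ]
    [CommRing R] [IsDomain R] (M : Matrix ι κ F) (r : κ → F) (ψ : AddChar F R) :
    ∑ w, (if M *ᵥ w = 0 then ψ (r ⬝ᵥ w) else 0) = 0 ∨
      ∑ w, (if M *ᵥ w = 0 then ψ (r ⬝ᵥ w) else 0) =
        (Fintype.card F ^ (Fintype.card κ - M.rank) : ℕ) := by
  set K := LinearMap.ker M.mulVecLin
  let χ : AddChar K R :=
    ψ.compAddMonoidHom ((dotProductBilin F F r).comp K.subtype).toAddMonoidHom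
  have hsum : ∑ w, (if M *ᵥ w = 0 then ψ (r ⬝ᵥ w) else 0) = ∑ x, χ x := by
    rw [← Finset.sum_filter]
    refine Finset.sum_subtype _ (fun w => ?_) (fun w => ψ (r ⬝ᵥ w))
    simp [K]
  rw [hsum, AddChar.sum_eq_ite, ← Nat.card_eq_fintype_card, natCard_ker_mulVecLin]
  split_ifs
  · exact Or.inr rfl
  · exact Or.inl rfl

lemma eq_zero_or_eq_one_of_card_eq_two (h2 : Fintype.card F = 2) (y : F) : y = 0 ∨ y = 1 :=
  or_iff_not_imp_left.mpr fun hy => by simpa [h2] using FiniteField.pow_card_sub_one_eq_one y hy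

lemma one_add_one_eq_zero_of_card_eq_two (h2 : Fintype.card F = 2) : (1 : F) + 1 = 0 := by
  simpa [h2, one_add_one_eq_two] using FiniteField.cast_card_eq_zero F

open Classical in
noncomputable def signChar (h2 : Fintype.card F = 2) : AddChar F ℝ where
  toFun c := if c = 0 then 1 else -1
  map_zero_eq_one' := if_pos rfl
  map_add_eq_mul' a b := by
    rcases eq_zero_or_eq_one_of_card_eq_two h2 a with rfl | rfl <;>
    rcases eq_zero_or_eq_one_of_card_eq_two h2 b with rfl | rfl <;>
    simp [one_add_one_eq_zero_of_card_eq_two h2]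

end FiniteField

section DigitalNet

variable {F : Type} [Field F] [Fintype F] {s m : ℕ}

def digitEquiv (φ : Fin (Fintype.card F) ≃ F) (m : ℕ) : Fin (Fintype.card F ^ m) ≃ (Fin m → F) :=
  finFunctionFinEquiv.symm.trans ((Equiv.refl _).arrowCongr φ)

lemma digitEquiv_apply (φ : Fin (Fintype.card F) ≃ F) (i : Fin (Fintype.card F ^ m)) (c : Fin m) :
    digitEquiv φ m i c = toF φ (ndigit (Fintype.card F) i c) := by
  simp [digitEquiv, toF, ndigit, Fin.ext_iff, finFunctionFinEquiv_symm_apply_val]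

lemma fromF_lt_card (φ : Fin (Fintype.card F) ≃ F) (y : F) : fromF φ y < Fintype.card F :=
  (φ.symm y).isLt

noncomputable def netPoint (φ : Fin (Fintype.card F) ≃ F) (C : Fin s → ℕ → Fin m → F) (n : ℕ)
    (v : Fin m → F) (j : Fin s) : ℝ :=
  baseExpansion (Fintype.card F) (fun a => fromF φ (C j a ⬝ᵥ v)) n

lemma dnet_eq_netPoint (φ : Fin (Fintype.card F) ≃ F) (C : Fin s → ℕ → Fin m → F) (n : ℕ)
    (i : Fin (Fintype.card F ^ m)) (j : Fin s) :
    dnet φ C n i j = netPoint φ C n (digitEquiv φ m i) j := by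
  simp only [netPoint, dotProduct, digitEquiv_apply]
  rfl

lemma floor_netPoint_eq_iff (φ : Fin (Fintype.card F) ≃ F) (C : Fin s → ℕ → Fin m → F) (n : ℕ)
    (v w : Fin m → F) (j : Fin s) (r : ℕ) :
    ⌊(Fintype.card F : ℝ) ^ r * netPoint φ C n v j⌋ =
        ⌊(Fintype.card F : ℝ) ^ r * netPoint φ C n w j⌋ ↔
      ∀ a < min r n, C j a ⬝ᵥ (v - w) = 0 := by
  rw [netPoint, netPoint, baseExpansion.floor_pow_mul_eq_iff (fun _ => fromF_lt_card φ _)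
    (fun _ => fromF_lt_card φ _)]
  simp only [fromF, Fin.val_inj, φ.symm.injective.eq_iff, dotProduct_sub, sub_eq_zero]

open Classical in
/-- The summand of `Γ_{u,k}` for two net points whose digit vectors differ by `w`. -/
noncomputable def gainKernel (C : Fin s → ℕ → Fin m → F) (n : ℕ) (u : Finset (Fin s))
    (k : Fin s → ℕ) (w : Fin m → F) : ℝ :=
  ∏ j ∈ u, (((Fintype.card F : ℝ) * (if ∀ a < min (k j + 1) n, C j a ⬝ᵥ w = 0 then 1 else 0) -
      (if ∀ a < min (k j) n, C j a ⬝ᵥ w = 0 then 1 else 0)) / ((Fintype.card F : ℝ) - 1))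

theorem gain_dnet_eq_sum_gainKernel (φ : Fin (Fintype.card F) ≃ F) (C : Fin s → ℕ → Fin m → F)
    (n : ℕ) (u : Finset (Fin s)) (k : Fin s → ℕ) :
    gain (Fintype.card F) (Fintype.card F ^ m) (fun i j => dnet φ C n (i : ℕ) j) u k =
      ∑ w, gainKernel C n u k w := by
  classical
  have hinner (i : Fin (Fintype.card F ^ m)) :
      ∑ i', gainKernel C n u k (digitEquiv φ m i - digitEquiv φ m i') = ∑ w, gainKernel C n u k w :=
    Fintype.sum_equiv ((digitEquiv φ m).trans (Equiv.subLeft (digitEquiv φ m i))) _ _ fun _ => rfl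
  have hN : ((Fintype.card F ^ m : ℕ) : ℝ) ≠ 0 := by positivity
  simp only [gain, dnet_eq_netPoint, floor_netPoint_eq_iff]
  change 1 / _ * ∑ i, ∑ i', gainKernel C n u k (digitEquiv φ m i - digitEquiv φ m i') = _
  rw [Fintype.sum_congr _ _ hinner, sum_const, card_univ, Fintype.card_fin, nsmul_eq_mul,
    one_div, inv_mul_cancel_left₀ hN]

lemma mulVec_Cuk_eq_zero_iff (C : Fin s → ℕ → Fin m → F) (n : ℕ) (u : Finset (Fin s))
    (k : Fin s → ℕ) (w : Fin m → F) :
    Cuk C n u k *ᵥ w = 0 ↔ ∀ j ∈ u, ∀ a < min (k j) n, C j a ⬝ᵥ w = 0 := by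
  constructor
  · intro h j hj a ha
    simpa [mulVec, Cuk] using congrFun h ⟨j, a, by simpa [hj] using ha⟩
  · intro h
    ext ⟨j, a, ha⟩
    by_cases hj : j ∈ u
    · simpa [mulVec, Cuk] using h j hj a (by simpa [hj] using ha)
    · simp [hj] at ha

/-- The sum of the rows by which `C_{u,k+1_u}` extends `C_{u,k}`. -/
def sumNextRows (C : Fin s → ℕ → Fin m → F) (n : ℕ) (u : Finset (Fin s)) (k : Fin s → ℕ) :
    Fin m → F :=
  ∑ j ∈ u, if k j < n then C j (k j) else 0

open Classical in
lemma gainKernel_eq_ite (h2 : Fintype.card F = 2) (C : Fin s → ℕ → Fin m → F) (n : ℕ)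
    (u : Finset (Fin s)) (k : Fin s → ℕ) (w : Fin m → F) :
    gainKernel C n u k w =
      if Cuk C n u k *ᵥ w = 0 then signChar h2 (sumNextRows C n u k ⬝ᵥ w) else 0 := by
  have hb : (Fintype.card F : ℝ) = 2 := by rw [h2]; norm_num
  simp only [gainKernel, hb, Nat.forall_lt_min_succ_iff, mulVec_Cuk_eq_zero_iff]
  split_ifs with hw
  · rw [sumNextRows, sum_dotProduct, AddChar.map_sum_eq_prod]
    refine prod_congr rfl fun j hj => ?_
    simp only [eq_true (hw j hj), true_and, if_true]
    by_cases hkn : k j < n <;> by_cases hrow : C j (k j) ⬝ᵥ w = 0 <;>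
      simp [hkn, hrow, signChar] <;> norm_num
  · obtain ⟨j, hj, hB⟩ := not_forall₂.mp hw
    exact prod_eq_zero hj (by simp only [hB, false_and, if_false]; ring)

end DigitalNet

theorem stmt14_general {F : Type} [Field F] [Fintype F] {s m : ℕ}
    (h2 : Fintype.card F = 2)
    (φ : Fin (Fintype.card F) ≃ F)
    (C : Fin s → ℕ → Fin m → F) (n : ℕ)
    (u : Finset (Fin s)) (k : Fin s → ℕ) :
    gain (Fintype.card F) (Fintype.card F ^ m) (fun i j => dnet φ C n (i : ℕ) j) u k = 0 ∨
    gain (Fintype.card F) (Fintype.card F ^ m) (fun i j => dnet φ C n (i : ℕ) j) u k =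
      (2 : ℝ) ^ (m - (Cuk C n u k).rank) := by
  classical
  rw [gain_dnet_eq_sum_gainKernel]
  simp only [gainKernel_eq_ite h2]
  have := sum_ite_mulVec_eq_zero_or (Cuk C n u k) (sumNextRows C n u k) (signChar h2)
  rw [Fintype.card_fin, h2] at this
  exact_mod_cast this

/-- for a digital `(t,m,s)`-net in base `2`, every gain coefficient is
`0` or `2^{m - rank(C_{u,k})}`; in particular every nonzero gain coefficient is a
power of `2`. -/
theorem stmt14 {F : Type} [Field F] [Fintype F] {s m : ℕ}
    (h2 : Fintype.card F = 2)
    (φ : Fin (Fintype.card F) ≃ F) (hφ : φ ⟨0, Fintype.card_pos⟩ = 0)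
    (C : Fin s → ℕ → Fin m → F) (n : ℕ) (hn : m ≤ n)
    (t : ℕ) (ht : t ≤ m) (hnet : IsDigitalTNet C n t)
    (u : Finset (Fin s)) (hu : u.Nonempty) (k : Fin s → ℕ) :
    gain (Fintype.card F) (Fintype.card F ^ m) (fun i j => dnet φ C n (i : ℕ) j) u k = 0 ∨
    gain (Fintype.card F) (Fintype.card F ^ m) (fun i j => dnet φ C n (i : ℕ) j) u k =
      (2 : ℝ) ^ (m - (Cuk C n u k).rank) :=
  stmt14_general h2 φ C n u k
end

section
/- Define B(u,k) = b^{m−rank(C_{u,k})}(b−1)^{rank(C_{u,k})−rank(C_{u,k+1_u})}. Then for any nonempty u ⊆ {1,…,s} and any k, k' ∈ ℕ₀^{|u|} with k ≥ k' componentwise, B(u,k) ≤ B(u,k'). -/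
open Finset

/-!
Both ranks in `B(u,k)` grow with `k`, since `C_{u,k'}` is a submatrix of `C_{u,k}`. Writing
`B(u,k) = b^m ((b-1)/b)^{rank C_{u,k}} (b-1)^{-rank C_{u,k+1_u}}`, each factor is antitone in
its rank because `b ≥ 2`.
-/

lemma rank_Cuk_mono {F : Type} [Field F] [Fintype F] {s m : ℕ}
    (C : Fin s → ℕ → Fin m → F) (n : ℕ) (u : Finset (Fin s)) {k k' : Fin s → ℕ}
    (h : ∀ j, k' j ≤ k j) : (Cuk C n u k').rank ≤ (Cuk C n u k).rank := by
  rw [Matrix.rank_eq_finrank_span_row, Matrix.rank_eq_finrank_span_row]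
  refine Submodule.finrank_mono (Submodule.span_mono ?_)
  rintro _ ⟨⟨j, i⟩, rfl⟩
  refine ⟨⟨j, ⟨i, i.2.trans_le (min_le_min ?_ le_rfl)⟩⟩, rfl⟩
  split_ifs
  exacts [h j, le_rfl]

lemma plusOne_mono {s : ℕ} {k k' : Fin s → ℕ} (h : ∀ j, k' j ≤ k j) (v : Finset (Fin s)) :
    ∀ j, plusOne k' v j ≤ plusOne k v j := by
  intro j
  unfold plusOne
  split_ifs <;> simp [h j]

lemma zpow_sub_mul_zpow_sub_le {R : ℝ} (hR : 2 ≤ R) (M : ℤ) {a a' c c' : ℤ}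
    (ha : a' ≤ a) (hc : c' ≤ c) :
    R ^ (M - a) * (R - 1) ^ (a - c) ≤ R ^ (M - a') * (R - 1) ^ (a' - c') := by
  have hR0 : 0 < R := by linarith
  have hR1 : 0 < R - 1 := by linarith
  have split (a c : ℤ) :
      R ^ (M - a) * (R - 1) ^ (a - c) = R ^ M * (((R - 1) / R) ^ a * (R - 1) ^ (-c)) := by
    rw [zpow_sub₀ hR0.ne', zpow_sub₀ hR1.ne', div_zpow, zpow_neg]
    field_simp
  rw [split, split]
  gcongr R ^ M * ?_
  have hq : ((R - 1) / R) ^ a ≤ ((R - 1) / R) ^ a' :=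
    zpow_le_zpow_right_of_le_one₀ (div_pos hR1 hR0) ((div_le_one₀ hR0).2 (by linarith)) ha
  have hp : (R - 1) ^ (-c) ≤ (R - 1) ^ (-c') :=
    zpow_le_zpow_right₀ (by linarith) (by omega)
  exact mul_le_mul hq hp (zpow_pos hR1 _).le (zpow_pos (div_pos hR1 hR0) _).le

theorem stmt15_general {F : Type} [Field F] [Fintype F] {s m : ℕ}
    (C : Fin s → ℕ → Fin m → F) (n : ℕ)
    (u : Finset (Fin s)) (k k' : Fin s → ℕ)
    (hkk : ∀ j, k' j ≤ k j) :
    Bcoef C n u k ≤ Bcoef C n u k' := by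
  have hb : (2 : ℝ) ≤ Fintype.card F := by exact_mod_cast Fintype.one_lt_card (α := F)
  exact zpow_sub_mul_zpow_sub_le hb m (mod_cast rank_Cuk_mono C n u hkk)
    (mod_cast rank_Cuk_mono C n u (plusOne_mono hkk u))

/-- monotonicity of `B(u,k)`: if `k ≥ k'` componentwise then
`B(u,k) ≤ B(u,k')`. -/
theorem stmt15 {F : Type} [Field F] [Fintype F] {s m : ℕ}
    (C : Fin s → ℕ → Fin m → F) (n : ℕ)
    (u : Finset (Fin s)) (hu : u.Nonempty) (k k' : Fin s → ℕ)
    (hkk : ∀ j, k' j ≤ k j) :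
    Bcoef C n u k ≤ Bcoef C n u k' :=
  stmt15_general C n u k k' hkk
end
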